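/- arXiv:1612.07870 — 3 statements merged into one kernel-verified Lean document; each statement's English description precedes it below -/
import Mathlib

section
/- Let N ≥ 2 and s ∈ ℝ, and let w := w_{N,s}. There exists a constant C₁ > 1, independent of N, s, t, n and 𝔟, such that for every t > 0 and every n ≥ 1 the Kawahara Picard iterates satisfy ‖g_n[w](t)‖_{L¹(ℝ)} ≤ (C₁ N t ‖w‖_{L¹})^{n−1} ‖w‖_{L¹} and ‖g_n[w](t)‖_{L²(ℝ)} ≤ (C₁ N t ‖w‖_{L¹})^{n−1} ‖w‖_{L²}. -/
open MeasureTheory Filter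
open scoped ENNReal NNReal Topology

noncomputable section

/-- Convolution of two functions on `ℝ` with respect to Lebesgue measure. -/
def convR (f g : ℝ → ℂ) : ℝ → ℂ := fun x => ∫ y, f y * g (x - y)

/-- The `L¹` norm `∫ |f|`. -/
def L1R (f : ℝ → ℂ) : ℝ≥0∞ := ∫⁻ x, (‖f x‖₊ : ℝ≥0∞)

/-- The `L²` norm `(∫ |f|²)^{1/2}`. -/
def L2R (f : ℝ → ℂ) : ℝ≥0∞ := (∫⁻ x, (‖f x‖₊ : ℝ≥0∞) ^ 2) ^ ((1 : ℝ) / 2)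

/-- The `H^s` Sobolev norm read on the Fourier side. -/
def HsR (s : ℝ) (f : ℝ → ℂ) : ℝ≥0∞ :=
  (∫⁻ ξ : ℝ, ENNReal.ofReal ((1 + ξ ^ 2) ^ s) * (‖f ξ‖₊ : ℝ≥0∞) ^ 2) ^ ((1 : ℝ) / 2)

/-- The datum `w_{N,s} = (log N)⁻¹ N^{−s} 1_{[N−1,N+1] ∪ [−N−1,−N+1]}`. -/
def wNs (N s : ℝ) : ℝ → ℂ := fun ξ =>
  (((Real.log N)⁻¹ * N ^ (-s) : ℝ) : ℂ) *
    (Set.Icc (N - 1) (N + 1) ∪ Set.Icc (-N - 1) (-N + 1)).indicator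
      (fun _ => (1 : ℂ)) ξ

/-- The property that `g : ℕ → ℝ → (ℝ → ℂ)` is the family of Fourier-side Picard
iterates for the Kawahara equation `∂ₜu − ∂ₓ⁵u + 𝔟∂ₓ³u + ∂ₓ(u²) = 0` with Fourier
datum `w`: `g 1 t ξ = e^{it(ξ⁵+𝔟ξ³)} w(ξ)` and, for `n ≥ 2`,
`g n t ξ = −iξ Σ_{n₁+n₂=n, n₁,n₂≥1} ∫₀ᵗ e^{i(t−t')(ξ⁵+𝔟ξ³)} (g n₁ t' ∗ g n₂ t')(ξ) dt'`. -/
def KawPicard (b : ℝ) (w : ℝ → ℂ) (g : ℕ → ℝ → ℝ → ℂ) : Prop :=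
  (∀ t ξ : ℝ, g 1 t ξ = Complex.exp (Complex.I * t * (ξ ^ 5 + b * ξ ^ 3)) * w ξ) ∧
  (∀ n, 2 ≤ n → ∀ t ξ : ℝ, g n t ξ =
    -Complex.I * ξ * ∑ k ∈ Finset.Ioo 0 n,
      ∫ t' in (0:ℝ)..t, Complex.exp (Complex.I * (t - t') * (ξ ^ 5 + b * ξ ^ 3)) *
        convR (g k t') (g (n - k) t') ξ)

/-! By strong induction on `n`, `|g_n(t, ξ)| ≤ c_n (R t)^{n-1} M^n χ^{*n}(ξ)`, where `χ` is the
indicator of the support of `w`, `M` its height, `R = N + 1` and `c_n = 16^{n-1} / n²`.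
In the Duhamel term the factor `|ξ|` is at most `n R` on the support of `χ^{*n}`, the time
integral produces `t^{n-1} / (n - 1)`, and the coefficients close up because
`∑ 1 / (k² (n - k)²) ≤ 8 / n²`. Integrating this pointwise majorant with
`∫ χ^{*n} = |supp w|^n` and `χ^{*n} ≤ |supp w|^{n-1}` gives both bounds. Only pointwise bounds
by nonnegative majorants are used, so no measurability of the iterates is needed. -/

namespace MeasureTheory

variable {G : Type*} [MeasurableSpace G]

section Add

variable [Add G] [Neg G]

/-- `lconvolutionPow f μ m` is the `(m + 1)`-fold convolution power `f ⋆ₗ ⋯ ⋆ₗ f`. -/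
def lconvolutionPow (f : G → ℝ≥0∞) (μ : Measure G) : ℕ → G → ℝ≥0∞
  | 0 => f
  | m + 1 => f ⋆ₗ[μ] lconvolutionPow f μ m

theorem lconvolutionPow_zero (f : G → ℝ≥0∞) (μ : Measure G) :
    lconvolutionPow f μ 0 = f := rfl

theorem lconvolutionPow_succ (f : G → ℝ≥0∞) (μ : Measure G) (m : ℕ) :
    lconvolutionPow f μ (m + 1) = f ⋆ₗ[μ] lconvolutionPow f μ m := rfl

theorem lconvolutionPow_le {μ : Measure G} {f : G → ℝ≥0∞} (hf : Measurable f)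
    (hf_le : ∀ x, f x ≤ 1) :
    ∀ m x, lconvolutionPow f μ m x ≤ (∫⁻ x, f x ∂μ) ^ m
  | 0, x => by simpa [lconvolutionPow_zero] using hf_le x
  | m + 1, x =>
    calc ∫⁻ y, f y * lconvolutionPow f μ m (-y + x) ∂μ
        ≤ ∫⁻ y, f y * (∫⁻ x, f x ∂μ) ^ m ∂μ := by
          gcongr with y; exact lconvolutionPow_le hf hf_le m _
      _ = (∫⁻ x, f x ∂μ) ^ (m + 1) := by rw [lintegral_mul_const _ hf, pow_succ']

end Add

section Group

variable [AddGroup G] [MeasurableAdd₂ G] [MeasurableNeg G] {μ : Measure G} [SFinite μ]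
  {f g : G → ℝ≥0∞}

theorem measurable_lconvolutionPow (hf : Measurable f) : ∀ m, Measurable (lconvolutionPow f μ m)
  | 0 => hf
  | m + 1 => measurable_lconvolution μ hf (measurable_lconvolutionPow hf m)

variable [μ.IsAddLeftInvariant]

theorem lintegral_lconvolution (hf : Measurable f) (hg : Measurable g) :
    ∫⁻ x, (f ⋆ₗ[μ] g) x ∂μ = (∫⁻ x, f x ∂μ) * ∫⁻ x, g x ∂μ := by
  simp only [lconvolution_def]
  rw [lintegral_lintegral_swap (by fun_prop)]
  calc ∫⁻ y, ∫⁻ x, f y * g (-y + x) ∂μ ∂μ = ∫⁻ y, f y * ∫⁻ x, g x ∂μ ∂μ := by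
        refine lintegral_congr fun y => ?_
        rw [lintegral_const_mul _ (by fun_prop), lintegral_add_left_eq_self g (-y)]
    _ = (∫⁻ x, f x ∂μ) * ∫⁻ x, g x ∂μ := lintegral_mul_const _ hf

theorem lintegral_lconvolutionPow (hf : Measurable f) :
    ∀ m, ∫⁻ x, lconvolutionPow f μ m x ∂μ = (∫⁻ x, f x ∂μ) ^ (m + 1)
  | 0 => (pow_one _).symm
  | m + 1 => by
    rw [lconvolutionPow_succ, lintegral_lconvolution hf (measurable_lconvolutionPow hf m),
      lintegral_lconvolutionPow hf m, pow_succ' _ (m + 1)]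

theorem lconvolutionPow_add (hf : Measurable f) :
    ∀ a b, lconvolutionPow f μ a ⋆ₗ[μ] lconvolutionPow f μ b = lconvolutionPow f μ (a + b + 1)
  | 0, b => by rw [zero_add]; rfl
  | a + 1, b => by
    rw [lconvolutionPow_succ f μ a, ← lconvolution_assoc hf (measurable_lconvolutionPow hf a)
      (measurable_lconvolutionPow hf b), lconvolutionPow_add hf a b,
      show a + 1 + b + 1 = a + b + 1 + 1 by ring, ← lconvolutionPow_succ]

end Group

section Support

variable [SeminormedAddGroup G] {μ : Measure G} {f g : G → ℝ≥0∞} {R S : ℝ}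

theorem lconvolution_eq_zero_of_lt_norm (hf : ∀ x, R < ‖x‖ → f x = 0)
    (hg : ∀ x, S < ‖x‖ → g x = 0) {x : G} (hx : R + S < ‖x‖) : (f ⋆ₗ[μ] g) x = 0 := by
  refine (lintegral_congr fun y => ?_).trans lintegral_zero
  rcases lt_or_ge R ‖y‖ with hy | hy
  · rw [hf y hy, zero_mul]
  · have : ‖x‖ ≤ ‖y‖ + ‖-y + x‖ := by simpa using norm_add_le y (-y + x)
    rw [hg _ (by linarith), mul_zero]

theorem lconvolutionPow_eq_zero_of_lt_norm (hf : ∀ x, R < ‖x‖ → f x = 0) :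
    ∀ (m : ℕ) x, ((m : ℝ) + 1) * R < ‖x‖ → lconvolutionPow f μ m x = 0
  | 0, x, hx => hf x (by simpa using hx)
  | m + 1, x, hx => lconvolution_eq_zero_of_lt_norm hf (lconvolutionPow_eq_zero_of_lt_norm hf m)
      (by push_cast at hx; linarith)

theorem enorm_mul_lconvolutionPow_le (hf : ∀ x, R < ‖x‖ → f x = 0) (m : ℕ) (x : G) :
    ‖x‖ₑ * lconvolutionPow f μ m x
      ≤ ENNReal.ofReal (((m : ℝ) + 1) * R) * lconvolutionPow f μ m x := by
  rcases le_or_gt ‖x‖ ((m + 1) * R) with hx | hx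
  · rw [← ofReal_norm]; gcongr
  · simp [lconvolutionPow_eq_zero_of_lt_norm hf m x hx]

end Support

end MeasureTheory

theorem enorm_intervalIntegral_le_lintegral {E : Type*} [NormedAddCommGroup E] [NormedSpace ℝ E]
    {f : ℝ → E} {a b : ℝ} (hab : a ≤ b) :
    ‖∫ x in a..b, f x‖ₑ ≤ ∫⁻ x in Set.Ioc a b, ‖f x‖ₑ := by
  rw [intervalIntegral.integral_of_le hab]
  exact enorm_integral_le_lintegral_enorm f

theorem lintegral_Ioc_ofReal_eq_intervalIntegral {f : ℝ → ℝ} {a b : ℝ} (hab : a ≤ b)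
    (hf : IntervalIntegrable f volume a b) (hf_nonneg : ∀ x ∈ Set.Ioc a b, 0 ≤ f x) :
    ∫⁻ x in Set.Ioc a b, ENNReal.ofReal (f x) = ENNReal.ofReal (∫ x in a..b, f x) := by
  rw [intervalIntegral.integral_of_le hab,
    ofReal_integral_eq_lintegral_ofReal hf.1 ((ae_restrict_iff' measurableSet_Ioc).2
      (Filter.Eventually.of_forall hf_nonneg))]

theorem enorm_convR_le {f g : ℝ → ℂ} {p q : ℝ → ℝ≥0∞} {a b : ℝ≥0∞} (hp : Measurable p)
    (hq : Measurable q) (hf : ∀ x, ‖f x‖ₑ ≤ a * p x) (hg : ∀ x, ‖g x‖ₑ ≤ b * q x) (ξ : ℝ) :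
    ‖convR f g ξ‖ₑ ≤ a * b * (p ⋆ₗ q) ξ :=
  calc ‖convR f g ξ‖ₑ ≤ ∫⁻ y, ‖f y‖ₑ * ‖g (ξ - y)‖ₑ := by
        simpa only [convR, enorm_mul] using
          enorm_integral_le_lintegral_enorm fun y => f y * g (ξ - y)
    _ ≤ ∫⁻ y, a * p y * (b * q (-y + ξ)) := by
        gcongr with y
        · exact hf y
        · rw [neg_add_eq_sub]; exact hg _
    _ = a * b * (p ⋆ₗ q) ξ := by
        rw [lconvolution_def, ← lintegral_const_mul _ (by fun_prop)]
        exact lintegral_congr fun y => by ring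

theorem lintegral_enorm_convR_le {f₁ f₂ : ℝ → ℝ → ℂ} {p₁ p₂ : ℝ → ℝ≥0∞} {B₁ B₂ : ℝ → ℝ} {t : ℝ}
    (ht : 0 ≤ t) (hp₁ : Measurable p₁) (hp₂ : Measurable p₂) (hB₁ : Continuous B₁)
    (hB₂ : Continuous B₂) (hB₁_nonneg : ∀ τ ∈ Set.Ioc 0 t, 0 ≤ B₁ τ)
    (hB₂_nonneg : ∀ τ ∈ Set.Ioc 0 t, 0 ≤ B₂ τ)
    (hf₁ : ∀ τ ∈ Set.Ioc 0 t, ∀ x, ‖f₁ τ x‖ₑ ≤ ENNReal.ofReal (B₁ τ) * p₁ x)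
    (hf₂ : ∀ τ ∈ Set.Ioc 0 t, ∀ x, ‖f₂ τ x‖ₑ ≤ ENNReal.ofReal (B₂ τ) * p₂ x) (ξ : ℝ) :
    ∫⁻ τ in Set.Ioc 0 t, ‖convR (f₁ τ) (f₂ τ) ξ‖ₑ
      ≤ ENNReal.ofReal (∫ τ in (0 : ℝ)..t, B₁ τ * B₂ τ) * (p₁ ⋆ₗ p₂) ξ :=
  calc ∫⁻ τ in Set.Ioc 0 t, ‖convR (f₁ τ) (f₂ τ) ξ‖ₑ
      ≤ ∫⁻ τ in Set.Ioc 0 t, ENNReal.ofReal (B₁ τ * B₂ τ) * (p₁ ⋆ₗ p₂) ξ := by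
        refine setLIntegral_mono' measurableSet_Ioc fun τ hτ => ?_
        rw [ENNReal.ofReal_mul (hB₁_nonneg τ hτ)]
        exact enorm_convR_le hp₁ hp₂ (hf₁ τ hτ) (hf₂ τ hτ) ξ
    _ = ENNReal.ofReal (∫ τ in (0 : ℝ)..t, B₁ τ * B₂ τ) * (p₁ ⋆ₗ p₂) ξ := by
        rw [lintegral_mul_const _ (by fun_prop),
          lintegral_Ioc_ofReal_eq_intervalIntegral (f := fun τ => B₁ τ * B₂ τ) ht
            ((hB₁.mul hB₂).intervalIntegrable _ _)
            fun τ hτ => mul_nonneg (hB₁_nonneg τ hτ) (hB₂_nonneg τ hτ)]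

theorem sum_Ioo_comp_sub {M : Type*} [AddCommMonoid M] (n : ℕ) (f : ℕ → M) :
    ∑ k ∈ Finset.Ioo 0 n, f (n - k) = ∑ k ∈ Finset.Ioo 0 n, f k :=
  Finset.sum_nbij' (n - ·) (n - ·) (by simp; omega) (by simp; omega) (by simp; omega)
    (by simp; omega) (by simp)

theorem sum_Ioo_inv_sq_mul_inv_sq_le (n : ℕ) :
    ∑ k ∈ Finset.Ioo 0 n, ((k : ℝ) ^ 2)⁻¹ * (((n - k : ℕ) : ℝ) ^ 2)⁻¹ ≤ 8 / (n : ℝ) ^ 2 := by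
  have hterm : ∀ k ∈ Finset.Ioo 0 n, ((k : ℝ) ^ 2)⁻¹ * (((n - k : ℕ) : ℝ) ^ 2)⁻¹ ≤
      2 / (n : ℝ) ^ 2 * (((k : ℝ) ^ 2)⁻¹ + (((n - k : ℕ) : ℝ) ^ 2)⁻¹) := by
    intro k hk
    obtain ⟨hk0, hkn⟩ := Finset.mem_Ioo.1 hk
    have hsum : (n : ℝ) = k + (n - k : ℕ) := by norm_cast; omega
    have ha : (0 : ℝ) < k := by exact_mod_cast hk0
    have hc : (0 : ℝ) < (n - k : ℕ) := by exact_mod_cast Nat.sub_pos_of_lt hkn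
    rw [hsum, div_mul_eq_mul_div, le_div_iff₀ (by positivity)]
    field_simp
    nlinarith [sq_nonneg ((k : ℝ) - (n - k : ℕ))]
  calc _ ≤ ∑ k ∈ Finset.Ioo 0 n, 2 / (n : ℝ) ^ 2 * (((k : ℝ) ^ 2)⁻¹ + (((n - k : ℕ) : ℝ) ^ 2)⁻¹) :=
        Finset.sum_le_sum hterm
    _ = 2 / (n : ℝ) ^ 2 * (2 * ∑ k ∈ Finset.Ioo 0 n, ((k : ℝ) ^ 2)⁻¹) := by
        rw [← Finset.mul_sum, Finset.sum_add_distrib,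
          sum_Ioo_comp_sub n fun k => ((k : ℝ) ^ 2)⁻¹, two_mul]
    _ ≤ 2 / (n : ℝ) ^ 2 * (2 * 2) := by
        gcongr
        simpa using sum_Ioo_inv_sq_le (α := ℝ) 0 n
    _ = 8 / (n : ℝ) ^ 2 := by ring

def kawCoeff (n : ℕ) : ℝ := 16 ^ (n - 1) / (n : ℝ) ^ 2

def kawBound (R M : ℝ) (n : ℕ) (t : ℝ) : ℝ := kawCoeff n * (R * t) ^ (n - 1) * M ^ n

theorem kawCoeff_le (n : ℕ) : kawCoeff n ≤ 16 ^ (n - 1) := by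
  rcases Nat.eq_zero_or_pos n with rfl | hn
  · simp [kawCoeff]
  · exact div_le_self (by positivity) (one_le_pow₀ (by exact_mod_cast hn))

theorem kawCoeff_step {n : ℕ} (hn : 2 ≤ n) :
    (n : ℝ) / (n - 1) * ∑ k ∈ Finset.Ioo 0 n, kawCoeff k * kawCoeff (n - k) ≤ kawCoeff n := by
  have hprod : ∀ k ∈ Finset.Ioo 0 n, kawCoeff k * kawCoeff (n - k) =
      16 ^ (n - 2) * (((k : ℝ) ^ 2)⁻¹ * (((n - k : ℕ) : ℝ) ^ 2)⁻¹) := by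
    intro k hk
    obtain ⟨hk0, hkn⟩ := Finset.mem_Ioo.1 hk
    rw [kawCoeff, kawCoeff, show n - 2 = (k - 1) + (n - k - 1) by omega, pow_add]
    ring
  have hn' : (2 : ℝ) ≤ n := by exact_mod_cast hn
  have hratio : (n : ℝ) / (n - 1) ≤ 2 := by
    rw [div_le_iff₀ (by linarith)]; linarith
  rw [Finset.sum_congr rfl hprod, ← Finset.mul_sum]
  calc (n : ℝ) / (n - 1) * (16 ^ (n - 2) * ∑ k ∈ Finset.Ioo 0 n,
        ((k : ℝ) ^ 2)⁻¹ * (((n - k : ℕ) : ℝ) ^ 2)⁻¹)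
      ≤ 2 * (16 ^ (n - 2) * (8 / (n : ℝ) ^ 2)) := by
        gcongr
        exact sum_Ioo_inv_sq_mul_inv_sq_le n
    _ = kawCoeff n := by
        rw [kawCoeff, show n - 1 = n - 2 + 1 by omega, pow_succ]
        ring

theorem kawBound_nonneg {R M t : ℝ} (hR : 0 ≤ R) (hM : 0 ≤ M) (ht : 0 ≤ t) (n : ℕ) :
    0 ≤ kawBound R M n t := by
  unfold kawBound kawCoeff; positivity

theorem kawBound_le {R M t : ℝ} (hR : 0 ≤ R) (hM : 0 ≤ M) (ht : 0 ≤ t) {n : ℕ} (hn : 1 ≤ n) :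
    kawBound R M n t ≤ (16 * R * t * M) ^ (n - 1) * M := by
  calc kawBound R M n t ≤ 16 ^ (n - 1) * (R * t) ^ (n - 1) * M ^ n := by
        unfold kawBound; gcongr; exact kawCoeff_le n
    _ = (16 * R * t * M) ^ (n - 1) * M := by
        rw [show n = n - 1 + 1 by omega, pow_succ M (n - 1), Nat.add_sub_cancel]
        ring

theorem kawBound_step {R M t : ℝ} (hR : 0 ≤ R) (hM : 0 ≤ M) (ht : 0 ≤ t) {n : ℕ} (hn : 2 ≤ n) :
    n * R * ∑ k ∈ Finset.Ioo 0 n, ∫ τ in (0 : ℝ)..t, kawBound R M k τ * kawBound R M (n - k) τ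
      ≤ kawBound R M n t := by
  have hint : ∀ k ∈ Finset.Ioo 0 n, ∫ τ in (0 : ℝ)..t, kawBound R M k τ * kawBound R M (n - k) τ
      = kawCoeff k * kawCoeff (n - k) * (R ^ (n - 2) * M ^ n * (t ^ (n - 1) / (n - 1))) := by
    intro k hk
    obtain ⟨hk0, hkn⟩ := Finset.mem_Ioo.1 hk
    have hexp : ∀ τ : ℝ, kawBound R M k τ * kawBound R M (n - k) τ
        = kawCoeff k * kawCoeff (n - k) * R ^ (n - 2) * M ^ n * τ ^ (n - 2) := by
      intro τ
      unfold kawBound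
      rw [show n - 2 = (k - 1) + (n - k - 1) by omega, show n = k + (n - k) by omega]
      simp only [Nat.add_sub_cancel_left]
      ring
    simp only [hexp, intervalIntegral.integral_const_mul, integral_pow]
    rw [zero_pow (Nat.succ_ne_zero _), sub_zero, show n - 2 + 1 = n - 1 by omega,
      Nat.cast_sub (by omega : 2 ≤ n)]
    push_cast
    ring
  rw [Finset.sum_congr rfl hint, ← Finset.sum_mul]
  have hn' : (2 : ℝ) ≤ n := by exact_mod_cast hn
  calc (n : ℝ) * R * ((∑ k ∈ Finset.Ioo 0 n, kawCoeff k * kawCoeff (n - k)) *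
        (R ^ (n - 2) * M ^ n * (t ^ (n - 1) / (n - 1))))
      = (n / (n - 1) * ∑ k ∈ Finset.Ioo 0 n, kawCoeff k * kawCoeff (n - k)) *
          ((R * t) ^ (n - 1) * M ^ n) := by
        rw [show n - 1 = n - 2 + 1 by omega, pow_succ, pow_succ]
        field_simp
        ring
    _ ≤ kawCoeff n * ((R * t) ^ (n - 1) * M ^ n) := by gcongr; exact kawCoeff_step hn
    _ = kawBound R M n t := by rw [kawBound, mul_assoc]

theorem ofReal_kawBound_mul_pow_le {R M t K : ℝ} (hR : 0 ≤ R) (hM : 0 ≤ M) (ht : 0 ≤ t)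
    (hK : 16 * R ≤ K) (V : ℝ≥0∞) {n : ℕ} (hn : 1 ≤ n) :
    ENNReal.ofReal (kawBound R M n t) * V ^ (n - 1)
      ≤ (ENNReal.ofReal (K * t) * (ENNReal.ofReal M * V)) ^ (n - 1) * ENNReal.ofReal M := by
  have hKt : 0 ≤ K * t := mul_nonneg (by linarith) ht
  calc ENNReal.ofReal (kawBound R M n t) * V ^ (n - 1)
      ≤ ENNReal.ofReal ((K * t * M) ^ (n - 1) * M) * V ^ (n - 1) := by
        gcongr
        refine (kawBound_le hR hM ht hn).trans ?_
        gcongr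
    _ = (ENNReal.ofReal (K * t) * (ENNReal.ofReal M * V)) ^ (n - 1) * ENNReal.ofReal M := by
        rw [ENNReal.ofReal_mul (by positivity), ENNReal.ofReal_pow (by positivity),
          ENNReal.ofReal_mul hKt]
        ring

theorem lintegral_enorm_convR_le_kawBound {f₁ f₂ : ℝ → ℝ → ℂ} {χ : ℝ → ℝ≥0∞} {R M t : ℝ}
    (hχ : Measurable χ) (hR : 0 ≤ R) (hM : 0 ≤ M) (ht : 0 ≤ t) {k l : ℕ} (hk : 1 ≤ k)
    (hl : 1 ≤ l)
    (hf₁ : ∀ τ, 0 ≤ τ → ∀ x,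
      ‖f₁ τ x‖ₑ ≤ ENNReal.ofReal (kawBound R M k τ) * lconvolutionPow χ volume (k - 1) x)
    (hf₂ : ∀ τ, 0 ≤ τ → ∀ x,
      ‖f₂ τ x‖ₑ ≤ ENNReal.ofReal (kawBound R M l τ) * lconvolutionPow χ volume (l - 1) x)
    (ξ : ℝ) :
    ∫⁻ τ in Set.Ioc 0 t, ‖convR (f₁ τ) (f₂ τ) ξ‖ₑ
      ≤ ENNReal.ofReal (∫ τ in (0 : ℝ)..t, kawBound R M k τ * kawBound R M l τ) *
        lconvolutionPow χ volume (k + l - 1) ξ := by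
  have hB : ∀ k, Continuous (kawBound R M k) := fun k => by unfold kawBound; fun_prop
  have := lintegral_enorm_convR_le ht (measurable_lconvolutionPow hχ (k - 1))
    (measurable_lconvolutionPow hχ (l - 1)) (hB k) (hB l)
    (fun τ hτ => kawBound_nonneg hR hM hτ.1.le k) (fun τ hτ => kawBound_nonneg hR hM hτ.1.le l)
    (fun τ hτ => hf₁ τ hτ.1.le) (fun τ hτ => hf₂ τ hτ.1.le) ξ
  rwa [lconvolutionPow_add hχ, show k - 1 + (l - 1) + 1 = k + l - 1 by omega] at this

theorem enorm_exp_I_mul_dispersion (τ b ξ : ℝ) :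
    ‖Complex.exp (Complex.I * τ * (ξ ^ 5 + b * ξ ^ 3))‖ₑ = 1 := by
  rw [mul_assoc, show (τ : ℂ) * (ξ ^ 5 + b * ξ ^ 3) = ((τ * (ξ ^ 5 + b * ξ ^ 3) : ℝ) : ℂ) by
    push_cast; ring]
  exact Complex.enorm_exp_I_mul_ofReal _

namespace KawPicard

variable {b : ℝ} {w : ℝ → ℂ} {g : ℕ → ℝ → ℝ → ℂ}

theorem enorm_one (hg : KawPicard b w g) (t ξ : ℝ) : ‖g 1 t ξ‖ₑ = ‖w ξ‖ₑ := by
  rw [hg.1, enorm_mul, enorm_exp_I_mul_dispersion, one_mul]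

theorem enorm_le_sum (hg : KawPicard b w g) {n : ℕ} (hn : 2 ≤ n) {t : ℝ} (ht : 0 ≤ t) (ξ : ℝ) :
    ‖g n t ξ‖ₑ ≤ ‖ξ‖ₑ * ∑ k ∈ Finset.Ioo 0 n,
      ∫⁻ τ in Set.Ioc 0 t, ‖convR (g k τ) (g (n - k) τ) ξ‖ₑ := by
  have hfactor : ‖-Complex.I * (ξ : ℂ)‖ₑ = ‖ξ‖ₑ := by
    rw [← ofReal_norm, ← ofReal_norm, norm_mul, norm_neg, Complex.norm_I, one_mul,
      Complex.norm_real]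
  rw [hg.2 n hn t ξ, enorm_mul, hfactor]
  gcongr
  refine (enorm_sum_le _ _).trans (Finset.sum_le_sum fun k _ => ?_)
  refine (enorm_intervalIntegral_le_lintegral ht).trans (lintegral_mono fun τ => ?_)
  rw [enorm_mul, ← Complex.ofReal_sub, enorm_exp_I_mul_dispersion, one_mul]

theorem enorm_le_kawBound (hg : KawPicard b w g) {χ : ℝ → ℝ≥0∞} {R M : ℝ} (hχ : Measurable χ)
    (hχR : ∀ ξ, R < ‖ξ‖ → χ ξ = 0) (hR : 0 ≤ R) (hM : 0 ≤ M)
    (hw : ∀ ξ, ‖w ξ‖ₑ ≤ ENNReal.ofReal M * χ ξ) :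
    ∀ n, 1 ≤ n → ∀ t, 0 ≤ t → ∀ ξ,
      ‖g n t ξ‖ₑ ≤ ENNReal.ofReal (kawBound R M n t) * lconvolutionPow χ volume (n - 1) ξ := by
  intro n
  induction n using Nat.strong_induction_on with
  | _ n ih =>
  intro hn t ht ξ
  obtain rfl | hn2 : n = 1 ∨ 2 ≤ n := by omega
  · simpa [hg.enorm_one, kawBound, kawCoeff, lconvolutionPow_zero] using hw ξ
  have hI : ∀ k ∈ Finset.Ioo 0 n,
      ∫⁻ τ in Set.Ioc 0 t, ‖convR (g k τ) (g (n - k) τ) ξ‖ₑ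
        ≤ ENNReal.ofReal (∫ τ in (0 : ℝ)..t, kawBound R M k τ * kawBound R M (n - k) τ) *
          lconvolutionPow χ volume (n - 1) ξ := by
    intro k hk
    obtain ⟨hk0, hkn⟩ := Finset.mem_Ioo.1 hk
    have := lintegral_enorm_convR_le_kawBound hχ hR hM ht hk0 (by omega : 1 ≤ n - k)
      (fun τ hτ => ih k hkn hk0 τ hτ) (fun τ hτ => ih (n - k) (by omega) (by omega) τ hτ) ξ
    rwa [Nat.add_sub_cancel' hkn.le] at this
  have hI_nonneg : ∀ k ∈ Finset.Ioo 0 n,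
      0 ≤ ∫ τ in (0 : ℝ)..t, kawBound R M k τ * kawBound R M (n - k) τ := fun k _ =>
    intervalIntegral.integral_nonneg ht fun τ hτ =>
      mul_nonneg (kawBound_nonneg hR hM hτ.1 k) (kawBound_nonneg hR hM hτ.1 _)
  have hsupp : ‖ξ‖ₑ * lconvolutionPow χ volume (n - 1) ξ
      ≤ ENNReal.ofReal (n * R) * lconvolutionPow χ volume (n - 1) ξ := by
    simpa [Nat.cast_pred (by omega : 0 < n)] using enorm_mul_lconvolutionPow_le hχR (n - 1) ξ
  calc ‖g n t ξ‖ₑ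
      ≤ ‖ξ‖ₑ * ∑ k ∈ Finset.Ioo 0 n, ∫⁻ τ in Set.Ioc 0 t, ‖convR (g k τ) (g (n - k) τ) ξ‖ₑ :=
        hg.enorm_le_sum hn2 ht ξ
    _ ≤ ‖ξ‖ₑ * ∑ k ∈ Finset.Ioo 0 n,
          ENNReal.ofReal (∫ τ in (0 : ℝ)..t, kawBound R M k τ * kawBound R M (n - k) τ) *
            lconvolutionPow χ volume (n - 1) ξ := by
        gcongr with k hk; exact hI k hk
    _ ≤ ENNReal.ofReal (∑ k ∈ Finset.Ioo 0 n,
          ∫ τ in (0 : ℝ)..t, kawBound R M k τ * kawBound R M (n - k) τ) *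
            (ENNReal.ofReal (n * R) * lconvolutionPow χ volume (n - 1) ξ) := by
        rw [← Finset.sum_mul, ENNReal.ofReal_sum_of_nonneg hI_nonneg, mul_left_comm]
        gcongr
    _ ≤ ENNReal.ofReal (kawBound R M n t) * lconvolutionPow χ volume (n - 1) ξ := by
        rw [← mul_assoc, ← ENNReal.ofReal_mul (Finset.sum_nonneg hI_nonneg), mul_comm _ (n * R)]
        gcongr
        exact kawBound_step hR hM ht hn2

end KawPicard

theorem ENNReal.sq_rpow_one_div_two (x : ℝ≥0∞) : (x ^ 2) ^ ((1 : ℝ) / 2) = x := by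
  rw [← ENNReal.rpow_two, ← ENNReal.rpow_mul, mul_one_div_cancel two_ne_zero, ENNReal.rpow_one]

section Norms

variable {f : ℝ → ℂ} {χ : ℝ → ℝ≥0∞} {c : ℝ≥0∞} {m : ℕ}

theorem L1R_le_of_enorm_le (hχ : Measurable χ)
    (hf : ∀ x, ‖f x‖ₑ ≤ c * lconvolutionPow χ volume m x) :
    L1R f ≤ c * (∫⁻ x, χ x) ^ (m + 1) :=
  calc L1R f = ∫⁻ x, ‖f x‖ₑ := rfl
    _ ≤ ∫⁻ x, c * lconvolutionPow χ volume m x := lintegral_mono hf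
    _ = c * (∫⁻ x, χ x) ^ (m + 1) := by
        rw [lintegral_const_mul _ (measurable_lconvolutionPow hχ m), lintegral_lconvolutionPow hχ]

theorem L2R_le_of_enorm_le (hχ : Measurable χ) (hχ_le : ∀ x, χ x ≤ 1)
    (hf : ∀ x, ‖f x‖ₑ ≤ c * lconvolutionPow χ volume m x) :
    L2R f ≤ c * (∫⁻ x, χ x) ^ m * (∫⁻ x, χ x) ^ ((1 : ℝ) / 2) := by
  set I := ∫⁻ x, χ x with hI
  have hsq : ∀ x, ‖f x‖ₑ ^ 2 ≤ c ^ 2 * I ^ m * lconvolutionPow χ volume m x := fun x =>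
    calc ‖f x‖ₑ ^ 2 ≤ (c * lconvolutionPow χ volume m x) ^ 2 := by gcongr; exact hf x
      _ = c ^ 2 * lconvolutionPow χ volume m x * lconvolutionPow χ volume m x := by ring
      _ ≤ c ^ 2 * I ^ m * lconvolutionPow χ volume m x := by
          gcongr; exact lconvolutionPow_le hχ hχ_le m x
  calc L2R f ≤ (∫⁻ x, c ^ 2 * I ^ m * lconvolutionPow χ volume m x) ^ ((1 : ℝ) / 2) := by
        unfold L2R; gcongr with x; exact hsq x
    _ = ((c * I ^ m) ^ 2 * I) ^ ((1 : ℝ) / 2) := by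
        rw [lintegral_const_mul _ (measurable_lconvolutionPow hχ m), lintegral_lconvolutionPow hχ,
          ← hI]
        congr 1
        ring
    _ = c * I ^ m * I ^ ((1 : ℝ) / 2) := by
        rw [ENNReal.mul_rpow_of_nonneg _ _ (by norm_num), ENNReal.sq_rpow_one_div_two]

end Norms

theorem enorm_ofReal_mul_indicator (a : ℝ) (S : Set ℝ) (x : ℝ) :
    ‖(a : ℂ) * S.indicator (fun _ => (1 : ℂ)) x‖ₑ = ENNReal.ofReal |a| * S.indicator 1 x := by
  by_cases hx : x ∈ S <;> simp [hx, ← ofReal_norm]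

theorem L1R_ofReal_mul_indicator (a : ℝ) {S : Set ℝ} (hS : MeasurableSet S) :
    L1R (fun x => (a : ℂ) * S.indicator (fun _ => (1 : ℂ)) x) = ENNReal.ofReal |a| * volume S := by
  simp only [L1R, ← enorm_eq_nnnorm, enorm_ofReal_mul_indicator]
  rw [lintegral_const_mul _ (measurable_one.indicator hS), lintegral_indicator_one hS]

theorem L2R_ofReal_mul_indicator (a : ℝ) {S : Set ℝ} (hS : MeasurableSet S) :
    L2R (fun x => (a : ℂ) * S.indicator (fun _ => (1 : ℂ)) x) =
      ENNReal.ofReal |a| * volume S ^ ((1 : ℝ) / 2) := by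
  have hsq : ∀ x, (ENNReal.ofReal |a| * S.indicator 1 x) ^ 2 =
      ENNReal.ofReal |a| ^ 2 * S.indicator 1 x := fun x => by
    by_cases hx : x ∈ S <;> simp [hx]
  simp only [L2R, ← enorm_eq_nnnorm, enorm_ofReal_mul_indicator, hsq]
  rw [lintegral_const_mul _ (measurable_one.indicator hS), lintegral_indicator_one hS,
    ENNReal.mul_rpow_of_nonneg _ _ (by norm_num), ENNReal.sq_rpow_one_div_two]

theorem indicator_Icc_union_Icc_eq_zero_of_lt_norm {N : ℝ} (hN : 0 ≤ N) {ξ : ℝ}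
    (hξ : N + 1 < ‖ξ‖) :
    (Set.Icc (N - 1) (N + 1) ∪ Set.Icc (-N - 1) (-N + 1)).indicator (1 : ℝ → ℝ≥0∞) ξ = 0 := by
  refine Set.indicator_of_notMem (fun hmem => ?_) _
  rw [Real.norm_eq_abs, lt_abs] at hξ
  rcases hmem with ⟨h₁, h₂⟩ | ⟨h₁, h₂⟩ <;> rcases hξ with hξ | hξ <;> linarith

/-- `L¹`- and `L²`-bounds for the Kawahara Picard iterates with
datum `w_{N,s}`: `‖gₙ(t)‖_{L¹} ≤ (C₁ N t ‖w‖_{L¹})^{n−1} ‖w‖_{L¹}` and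
`‖gₙ(t)‖_{L²} ≤ (C₁ N t ‖w‖_{L¹})^{n−1} ‖w‖_{L²}`, with `C₁ > 1` independent of
`N`, `s`, `t`, `n` and `𝔟`. -/
theorem statement12 :
    ∃ C₁ : ℝ, 1 < C₁ ∧
      ∀ b : ℝ, b = -1 ∨ b = 0 ∨ b = 1 →
      ∀ N s : ℝ, 2 ≤ N →
      ∀ g : ℕ → ℝ → ℝ → ℂ, KawPicard b (wNs N s) g →
      ∀ t : ℝ, 0 < t → ∀ n : ℕ, 1 ≤ n →
        L1R (g n t) ≤
          (ENNReal.ofReal (C₁ * N * t) * L1R (wNs N s)) ^ (n - 1) * L1R (wNs N s) ∧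
        L2R (g n t) ≤
          (ENNReal.ofReal (C₁ * N * t) * L1R (wNs N s)) ^ (n - 1) * L2R (wNs N s) := by
  refine ⟨32, by norm_num, fun b _ N s hN g hg t ht n hn => ?_⟩
  set S := Set.Icc (N - 1) (N + 1) ∪ Set.Icc (-N - 1) (-N + 1)
  set a := (Real.log N)⁻¹ * N ^ (-s)
  have hS : MeasurableSet S := measurableSet_Icc.union measurableSet_Icc
  have hχ : Measurable (S.indicator (1 : ℝ → ℝ≥0∞)) := measurable_one.indicator hS
  have hpt := hg.enorm_le_kawBound hχ
    (fun ξ => indicator_Icc_union_Icc_eq_zero_of_lt_norm (by linarith)) (by linarith)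
    (abs_nonneg a) (fun ξ => (enorm_ofReal_mul_indicator a S ξ).le) n hn t ht.le
  have hc := ofReal_kawBound_mul_pow_le (by linarith) (abs_nonneg a) ht.le
    (show 16 * (N + 1) ≤ 32 * N by linarith) (volume S) hn
  have hL1 : L1R (wNs N s) = ENNReal.ofReal |a| * volume S := L1R_ofReal_mul_indicator a hS
  have hL2 : L2R (wNs N s) = ENNReal.ofReal |a| * volume S ^ ((1 : ℝ) / 2) :=
    L2R_ofReal_mul_indicator a hS
  rw [hL1, hL2]
  constructor
  · calc L1R (g n t)
        ≤ ENNReal.ofReal (kawBound (N + 1) |a| n t) * volume S ^ (n - 1) * volume S := by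
          rw [mul_assoc, ← pow_succ, ← lintegral_indicator_one hS]
          exact L1R_le_of_enorm_le hχ hpt
      _ ≤ _ := (mul_le_mul_left hc _).trans_eq (mul_assoc _ _ _)
  · calc L2R (g n t)
        ≤ ENNReal.ofReal (kawBound (N + 1) |a| n t) * volume S ^ (n - 1) *
            volume S ^ ((1 : ℝ) / 2) := by
          rw [← lintegral_indicator_one hS]
          exact L2R_le_of_enorm_le hχ (fun ξ => Set.indicator_le_self' (by simp) ξ) hpt
      _ ≤ _ := (mul_le_mul_left hc _).trans_eq (mul_assoc _ _ _)
end
end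

section
/- There exists a constant C > 0 such that for every 𝔟 ∈ {−1, 0, 1}, every N ≥ 2, and all ξ₁, ξ₂ ∈ ℝ with |ξ₁| ∈ [N−1, N+1], |ξ₂| ∈ [N−1, N+1] and |ξ₁ + ξ₂| ≤ 1, one has |(ξ₁+ξ₂)⁵ + 𝔟(ξ₁+ξ₂)³ − ξ₁⁵ − 𝔟ξ₁³ − ξ₂⁵ − 𝔟ξ₂³| ≤ C N⁴. -/
/-- Resonance (modulation) function bound for the Kawahara equation:
`|M(ξ₁,ξ₂)| = |(ξ₁+ξ₂)⁵ + 𝔟(ξ₁+ξ₂)³ − ξ₁⁵ − 𝔟ξ₁³ − ξ₂⁵ − 𝔟ξ₂³| ≤ C N⁴` whenever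
`|ξ₁|, |ξ₂| ∈ [N−1, N+1]` and `|ξ₁+ξ₂| ≤ 1`. -/
theorem statement14 :
    ∃ C : ℝ, 0 < C ∧
      ∀ b : ℝ, b = -1 ∨ b = 0 ∨ b = 1 →
      ∀ N : ℝ, 2 ≤ N → ∀ ξ₁ ξ₂ : ℝ,
        |ξ₁| ∈ Set.Icc (N - 1) (N + 1) → |ξ₂| ∈ Set.Icc (N - 1) (N + 1) →
        |ξ₁ + ξ₂| ≤ 1 →
        |(ξ₁ + ξ₂) ^ 5 + b * (ξ₁ + ξ₂) ^ 3 - ξ₁ ^ 5 - b * ξ₁ ^ 3 - ξ₂ ^ 5 - b * ξ₂ ^ 3|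
          ≤ C * N ^ 4 := by
  refine ⟨200, by norm_num, ?_⟩
  intro b hb N hN ξ₁ ξ₂ h1 h2 hs
  have hN0 : (0:ℝ) < N := by linarith
  have hx : |ξ₁| ≤ 2 * N := by have := h1.2; linarith
  have hy : |ξ₂| ≤ 2 * N := by have := h2.2; linarith
  have hN1 : (1:ℝ) ≤ N ^ 2 := by nlinarith
  have hNsq : N ^ 2 ≤ N ^ 4 := by nlinarith [sq_nonneg N, mul_le_mul_of_nonneg_left hN1 (sq_nonneg N)]
  have hN4 : (0:ℝ) < N ^ 4 := by positivity
  -- monomial bounds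
  have m1 : |ξ₁ ^ 4| ≤ 16 * N ^ 4 := by
    rw [abs_pow]
    calc |ξ₁| ^ 4 ≤ (2 * N) ^ 4 := pow_le_pow_left₀ (abs_nonneg _) hx 4
      _ = 16 * N ^ 4 := by ring
  have m2 : |ξ₂ ^ 4| ≤ 16 * N ^ 4 := by
    rw [abs_pow]
    calc |ξ₂| ^ 4 ≤ (2 * N) ^ 4 := pow_le_pow_left₀ (abs_nonneg _) hy 4
      _ = 16 * N ^ 4 := by ring
  have m3 : |ξ₁ ^ 3 * ξ₂| ≤ 16 * N ^ 4 := by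
    rw [abs_mul, abs_pow]
    calc |ξ₁| ^ 3 * |ξ₂| ≤ (2 * N) ^ 3 * (2 * N) :=
          mul_le_mul (pow_le_pow_left₀ (abs_nonneg _) hx 3) hy (abs_nonneg _) (by positivity)
      _ = 16 * N ^ 4 := by ring
  have m4 : |ξ₁ * ξ₂ ^ 3| ≤ 16 * N ^ 4 := by
    rw [abs_mul, abs_pow]
    calc |ξ₁| * |ξ₂| ^ 3 ≤ (2 * N) * (2 * N) ^ 3 :=
          mul_le_mul hx (pow_le_pow_left₀ (abs_nonneg _) hy 3) (by positivity) (by positivity)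
      _ = 16 * N ^ 4 := by ring
  have m5 : |ξ₁ ^ 2 * ξ₂ ^ 2| ≤ 16 * N ^ 4 := by
    rw [abs_mul, abs_pow, abs_pow]
    calc |ξ₁| ^ 2 * |ξ₂| ^ 2 ≤ (2 * N) ^ 2 * (2 * N) ^ 2 :=
          mul_le_mul (pow_le_pow_left₀ (abs_nonneg _) hx 2)
            (pow_le_pow_left₀ (abs_nonneg _) hy 2) (by positivity) (by positivity)
      _ = 16 * N ^ 4 := by ring
  have m6 : |ξ₁ ^ 2| ≤ 16 * N ^ 4 := by
    rw [abs_pow]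
    calc |ξ₁| ^ 2 ≤ (2 * N) ^ 2 := pow_le_pow_left₀ (abs_nonneg _) hx 2
      _ = 4 * N ^ 2 := by ring
      _ ≤ 16 * N ^ 4 := by nlinarith
  have m7 : |ξ₂ ^ 2| ≤ 16 * N ^ 4 := by
    rw [abs_pow]
    calc |ξ₂| ^ 2 ≤ (2 * N) ^ 2 := pow_le_pow_left₀ (abs_nonneg _) hy 2
      _ = 4 * N ^ 2 := by ring
      _ ≤ 16 * N ^ 4 := by nlinarith
  have m8 : |ξ₁ * ξ₂| ≤ 16 * N ^ 4 := by
    rw [abs_mul]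
    calc |ξ₁| * |ξ₂| ≤ (2 * N) * (2 * N) := mul_le_mul hx hy (abs_nonneg _) (by positivity)
      _ = 4 * N ^ 2 := by ring
      _ ≤ 16 * N ^ 4 := by nlinarith
  have m9 : |(ξ₁ + ξ₂) ^ 4| ≤ 16 * N ^ 4 := by
    rw [abs_pow]
    calc |ξ₁ + ξ₂| ^ 4 ≤ 1 ^ 4 := pow_le_pow_left₀ (abs_nonneg _) hs 4
      _ = 1 := by norm_num
      _ ≤ 16 * N ^ 4 := by nlinarith
  have m10 : |(ξ₁ + ξ₂) ^ 2| ≤ 16 * N ^ 4 := by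
    rw [abs_pow]
    calc |ξ₁ + ξ₂| ^ 2 ≤ 1 ^ 2 := pow_le_pow_left₀ (abs_nonneg _) hs 2
      _ = 1 := by norm_num
      _ ≤ 16 * N ^ 4 := by nlinarith
  obtain ⟨a1, a1'⟩ := abs_le.mp m1
  obtain ⟨a2, a2'⟩ := abs_le.mp m2
  obtain ⟨a3, a3'⟩ := abs_le.mp m3
  obtain ⟨a4, a4'⟩ := abs_le.mp m4
  obtain ⟨a5, a5'⟩ := abs_le.mp m5
  obtain ⟨a6, a6'⟩ := abs_le.mp m6
  obtain ⟨a7, a7'⟩ := abs_le.mp m7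
  obtain ⟨a8, a8'⟩ := abs_le.mp m8
  obtain ⟨a9, a9'⟩ := abs_le.mp m9
  obtain ⟨a10, a10'⟩ := abs_le.mp m10
  have key : (ξ₁ + ξ₂) ^ 5 + b * (ξ₁ + ξ₂) ^ 3 - ξ₁ ^ 5 - b * ξ₁ ^ 3 - ξ₂ ^ 5 - b * ξ₂ ^ 3
      = (ξ₁ + ξ₂) * ((ξ₁ + ξ₂) ^ 4 + b * (ξ₁ + ξ₂) ^ 2
          - (ξ₁ ^ 4 - ξ₁ ^ 3 * ξ₂ + ξ₁ ^ 2 * ξ₂ ^ 2 - ξ₁ * ξ₂ ^ 3 + ξ₂ ^ 4)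
          - b * (ξ₁ ^ 2 - ξ₁ * ξ₂ + ξ₂ ^ 2)) := by ring
  rw [key, abs_mul]
  have hPb : |(ξ₁ + ξ₂) ^ 4 + b * (ξ₁ + ξ₂) ^ 2
          - (ξ₁ ^ 4 - ξ₁ ^ 3 * ξ₂ + ξ₁ ^ 2 * ξ₂ ^ 2 - ξ₁ * ξ₂ ^ 3 + ξ₂ ^ 4)
          - b * (ξ₁ ^ 2 - ξ₁ * ξ₂ + ξ₂ ^ 2)| ≤ 200 * N ^ 4 := by
    rw [abs_le]
    rcases hb with rfl | rfl | rfl <;> constructor <;> linarith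
  calc |ξ₁ + ξ₂| * |(ξ₁ + ξ₂) ^ 4 + b * (ξ₁ + ξ₂) ^ 2
          - (ξ₁ ^ 4 - ξ₁ ^ 3 * ξ₂ + ξ₁ ^ 2 * ξ₂ ^ 2 - ξ₁ * ξ₂ ^ 3 + ξ₂ ^ 4)
          - b * (ξ₁ ^ 2 - ξ₁ * ξ₂ + ξ₂ ^ 2)| ≤ 1 * (200 * N ^ 4) :=
        mul_le_mul hs hPb (abs_nonneg _) (by norm_num)
    _ = 200 * N ^ 4 := by ring
end

section
/- There exists a constant c > 0 such that for every 𝔟 ∈ {−1, 0, 1}, every N ≥ 2, every s ∈ ℝ, every t with 0 < t ≤ c N^{−4}, and every ξ ∈ [−1, 1], the second Kawahara Picard iterate with datum w := w_{N,s} satisfies |g_2[w](t)(ξ)| ≥ (t/2) · |ξ| · (log N)^{−2} · N^{−2s}. -/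
/-! On the Fourier side, `g₂(t)(ξ) = −iξ α² e^{itφ(ξ)} ∫₀ᵗ ∫_S e^{iτΦ(η)} dη dτ`, where
`α = (log N)⁻¹ N^{−s}`, `φ(ξ) = ξ⁵ + 𝔟ξ³`, `S = {η : η, ξ − η ∈ supp w_{N,s}}` and
`Φ(η) = φ(η) + φ(ξ − η) − φ(ξ)` is the resonance function. The factorisation
`Φ(η) = −ξη(ξ − η)(5(ξ² − η(ξ − η)) + 3𝔟)` shows `|Φ| ≲ N⁴` on `S`, so for `t ≲ N⁻⁴` the
phase `τΦ` stays in `[−1, 1]`, where `cos ≥ 1/2`. Taking real parts, the double integral has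
modulus at least `t |S| / 2 ≥ t / 2`, since `S` contains an interval of length one. -/

open MeasureTheory Filter
open scoped ENNReal NNReal Topology

noncomputable section

open Set

lemma half_le_cos_of_abs_le_one {x : ℝ} (hx : |x| ≤ 1) : 1 / 2 ≤ Real.cos x := by
  have hx2 : x ^ 2 ≤ 1 := (sq_le_one_iff_abs_le_one x).2 hx
  linarith [Real.one_sub_sq_div_two_le_cos (x := x)]

lemma norm_exp_I_mul_ofReal_mul_ofReal (x y : ℝ) :
    ‖Complex.exp (Complex.I * x * y)‖ = 1 := by
  rw [Complex.norm_exp]; simp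

lemma exp_I_mul_sub_mul_exp_I_mul (t τ p q : ℂ) :
    Complex.exp (Complex.I * (t - τ) * p) * Complex.exp (Complex.I * τ * q) =
      Complex.exp (Complex.I * t * p) * Complex.exp (Complex.I * τ * (q - p)) := by
  rw [← Complex.exp_add, ← Complex.exp_add]; congr 1; ring

section PhaseIntegral

variable {Y : Type*} [TopologicalSpace Y] [T2Space Y] [MeasurableSpace Y] [OpensMeasurableSpace Y]
  {μ : Measure Y} [IsLocallyFiniteMeasure μ] {s : Set Y} {Φ : Y → ℝ}

lemma re_setIntegral_exp_I_mul_ge (hs : IsCompact s) (hΦ : Continuous Φ) {τ : ℝ}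
    (hcos : ∀ y ∈ s, 1 / 2 ≤ Real.cos (τ * Φ y)) :
    μ.real s / 2 ≤ (∫ y in s, Complex.exp (Complex.I * τ * Φ y) ∂μ).re := by
  have hint : IntegrableOn (fun y => Complex.exp (Complex.I * τ * Φ y)) s μ :=
    (by fun_prop : Continuous _).continuousOn.integrableOn_compact hs
  have hcos_int : IntegrableOn (fun y => Real.cos (τ * Φ y)) s μ :=
    (by fun_prop : Continuous _).continuousOn.integrableOn_compact hs
  have hre : (∫ y in s, Complex.exp (Complex.I * τ * Φ y) ∂μ).re =
      ∫ y in s, Real.cos (τ * Φ y) ∂μ := by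
    rw [← RCLike.re_to_complex, ← integral_re hint]
    refine integral_congr_ae (Eventually.of_forall fun y => ?_)
    dsimp only
    rw [RCLike.re_to_complex, show Complex.I * τ * Φ y = ↑(τ * Φ y) * Complex.I by push_cast; ring,
      Complex.exp_ofReal_mul_I_re]
  calc μ.real s / 2 = ∫ _ in s, (1 / 2 : ℝ) ∂μ := by
        rw [setIntegral_const, smul_eq_mul]; ring
    _ ≤ ∫ y in s, Real.cos (τ * Φ y) ∂μ :=
        setIntegral_mono_on (integrableOn_const hs.measure_lt_top.ne) hcos_int
          hs.measurableSet hcos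
    _ = _ := hre.symm

lemma norm_intervalIntegral_setIntegral_exp_I_mul_ge (hs : IsCompact s) (hΦ : Continuous Φ)
    {t : ℝ} (ht : 0 ≤ t) (hsmall : ∀ y ∈ s, t * |Φ y| ≤ 1) :
    t * μ.real s / 2 ≤ ‖∫ τ in 0..t, ∫ y in s, Complex.exp (Complex.I * τ * Φ y) ∂μ‖ := by
  set G : ℝ → ℂ := fun τ => ∫ y in s, Complex.exp (Complex.I * τ * Φ y) ∂μ
  have hG : Continuous G := continuous_parametric_integral_of_continuous (by fun_prop) hs
  have hcos : ∀ τ ∈ Icc 0 t, ∀ y ∈ s, 1 / 2 ≤ Real.cos (τ * Φ y) := fun τ hτ y hy =>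
    half_le_cos_of_abs_le_one <| by
      rw [abs_mul, abs_of_nonneg hτ.1]
      exact (mul_le_mul_of_nonneg_right hτ.2 (abs_nonneg _)).trans (hsmall y hy)
  calc t * μ.real s / 2 = ∫ _ in 0..t, μ.real s / 2 := by
        rw [intervalIntegral.integral_const, smul_eq_mul]; ring
    _ ≤ ∫ τ in 0..t, (G τ).re :=
        intervalIntegral.integral_mono_on ht intervalIntegrable_const
          ((Complex.continuous_re.comp hG).intervalIntegrable 0 t)
          fun τ hτ => re_setIntegral_exp_I_mul_ge hs hΦ (hcos τ hτ)
    _ = (∫ τ in 0..t, G τ).re := intervalIntegral.intervalIntegral_re (hG.intervalIntegrable 0 t)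
    _ ≤ _ := Complex.re_le_norm _

end PhaseIntegral

lemma IsCompact.setOf_mem_and_sub_mem {G : Type*} [AddGroup G] [TopologicalSpace G]
    [IsTopologicalAddGroup G] [T2Space G] {A : Set G} (hA : IsCompact A) (ξ : G) :
    IsCompact {η | η ∈ A ∧ ξ - η ∈ A} :=
  hA.inter_right (hA.isClosed.preimage (continuous_const.sub continuous_id))

lemma convR_modulated_indicator (φ : ℝ → ℝ) (α : ℂ) {A : Set ℝ} (hA : MeasurableSet A)
    (τ ξ : ℝ) :
    convR (fun η => Complex.exp (Complex.I * τ * φ η) * (α * A.indicator (fun _ => 1) η))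
        (fun η => Complex.exp (Complex.I * τ * φ η) * (α * A.indicator (fun _ => 1) η)) ξ =
      α ^ 2 * ∫ η in {η | η ∈ A ∧ ξ - η ∈ A},
        Complex.exp (Complex.I * τ * (φ η + φ (ξ - η))) := by
  have hS : MeasurableSet {η | η ∈ A ∧ ξ - η ∈ A} :=
    hA.inter (measurable_const.sub measurable_id hA)
  rw [convR, ← integral_const_mul, ← integral_indicator hS]
  congr 1; funext η
  by_cases h1 : η ∈ A <;> by_cases h2 : ξ - η ∈ A <;>
    simp only [indicator, h1, h2, mem_ofPred_eq, and_self, and_true, and_false, if_true,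
      if_false, mul_one, mul_zero, zero_mul]
  rw [mul_add, Complex.exp_add]; ring

def kawaharaSymbol (b ξ : ℝ) : ℝ := ξ ^ 5 + b * ξ ^ 3

def kawaharaResonance (b ξ η : ℝ) : ℝ :=
  kawaharaSymbol b η + kawaharaSymbol b (ξ - η) - kawaharaSymbol b ξ

lemma kawaharaResonance_eq (b ξ η : ℝ) :
    kawaharaResonance b ξ η = -(ξ * η * (ξ - η)) * (5 * (ξ ^ 2 - η * (ξ - η)) + 3 * b) := by
  unfold kawaharaResonance kawaharaSymbol; ring

lemma abs_kawaharaResonance_le {b ξ η M : ℝ} (hb : |b| ≤ 1) (hξ : |ξ| ≤ 1) (hM : 1 ≤ M)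
    (hη : |η| ≤ M) (hηξ : |ξ - η| ≤ M) : |kawaharaResonance b ξ η| ≤ 13 * M ^ 4 := by
  have hM0 : 0 ≤ M := zero_le_one.trans hM
  have hprod : |η * (ξ - η)| ≤ M ^ 2 := by
    rw [abs_mul, sq]; exact mul_le_mul hη hηξ (abs_nonneg _) hM0
  have hξ2 : ξ ^ 2 ≤ 1 := (sq_le_one_iff_abs_le_one ξ).2 hξ
  have hfactor : |5 * (ξ ^ 2 - η * (ξ - η)) + 3 * b| ≤ 5 * M ^ 2 + 8 := by
    obtain ⟨hp₁, hp₂⟩ := abs_le.1 hprod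
    obtain ⟨hb₁, hb₂⟩ := abs_le.1 hb
    rw [abs_le]; constructor <;> nlinarith [sq_nonneg ξ]
  rw [kawaharaResonance_eq, abs_mul, abs_neg, mul_assoc, abs_mul]
  calc |ξ| * |η * (ξ - η)| * |5 * (ξ ^ 2 - η * (ξ - η)) + 3 * b|
      ≤ 1 * M ^ 2 * (5 * M ^ 2 + 8) := by gcongr
    _ ≤ 13 * M ^ 4 := by nlinarith [pow_le_pow_left₀ zero_le_one hM 2]

lemma KawPicard.g_two_eq_of_indicator {b : ℝ} {α : ℂ} {A : Set ℝ} (hA : MeasurableSet A)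
    {g : ℕ → ℝ → ℝ → ℂ} (hg : KawPicard b (fun η => α * A.indicator (fun _ => 1) η) g)
    (t ξ : ℝ) :
    g 2 t ξ = -Complex.I * ξ * α ^ 2 * Complex.exp (Complex.I * t * kawaharaSymbol b ξ) *
      ∫ τ in 0..t, ∫ η in {η | η ∈ A ∧ ξ - η ∈ A},
        Complex.exp (Complex.I * τ * kawaharaResonance b ξ η) := by
  have hg1 : ∀ τ, g 1 τ = fun η =>
      Complex.exp (Complex.I * τ * kawaharaSymbol b η) * (α * A.indicator (fun _ => 1) η) := by
    intro τ; funext η; rw [hg.1]; push_cast [kawaharaSymbol]; rfl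
  rw [hg.2 2 le_rfl, show Finset.Ioo 0 2 = {1} from rfl, Finset.sum_singleton]
  simp only [Nat.reduceSub, hg1, convR_modulated_indicator _ _ hA]
  simp only [← intervalIntegral.integral_const_mul, ← integral_const_mul (L := ℂ)]
  congr 1; funext τ; congr 1; funext η
  simp only [kawaharaResonance, kawaharaSymbol]
  push_cast
  rw [mul_left_comm (Complex.exp _) (α ^ 2), exp_I_mul_sub_mul_exp_I_mul]
  ring

lemma KawPicard.norm_g_two_eq_of_indicator {b α : ℝ} {A : Set ℝ} (hA : MeasurableSet A)
    {g : ℕ → ℝ → ℝ → ℂ} (hg : KawPicard b (fun η => α * A.indicator (fun _ => 1) η) g)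
    (t ξ : ℝ) :
    ‖g 2 t ξ‖ = |ξ| * α ^ 2 * ‖∫ τ in 0..t, ∫ η in {η | η ∈ A ∧ ξ - η ∈ A},
        Complex.exp (Complex.I * τ * kawaharaResonance b ξ η)‖ := by
  rw [hg.g_two_eq_of_indicator hA]
  simp only [norm_mul, norm_neg, Complex.norm_I, norm_pow, Complex.norm_real, Real.norm_eq_abs,
    sq_abs, norm_exp_I_mul_ofReal_mul_ofReal, one_mul, mul_one]

-- `wNs N s` unfolds to `α * (wNsSupport N).indicator 1` with `α = (log N)⁻¹ N^{-s}`, so the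
-- `KawPicard` lemmas above apply to it directly.
def wNsSupport (N : ℝ) : Set ℝ := Icc (N - 1) (N + 1) ∪ Icc (-N - 1) (-N + 1)

lemma isCompact_wNsSupport (N : ℝ) : IsCompact (wNsSupport N) :=
  isCompact_Icc.union isCompact_Icc

lemma abs_le_of_mem_wNsSupport {N η : ℝ} (hN : 0 ≤ N) (hη : η ∈ wNsSupport N) :
    |η| ≤ N + 1 := by
  rcases hη with ⟨h1, h2⟩ | ⟨h1, h2⟩ <;> rw [abs_le] <;> constructor <;> linarith

lemma one_le_volume_real_wNsSupport_pairs {N ξ : ℝ} (hξ : ξ ∈ Icc (-1 : ℝ) 1) :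
    1 ≤ volume.real {η | η ∈ wNsSupport N ∧ ξ - η ∈ wNsSupport N} := by
  set L := N - 1 + max ξ 0
  have hsub : Icc L (L + 1) ⊆ {η | η ∈ wNsSupport N ∧ ξ - η ∈ wNsSupport N} := by
    rintro η ⟨hLη, hηL⟩
    have hξm : ξ ≤ max ξ 0 := le_max_left ξ 0
    have hm0 : 0 ≤ max ξ 0 := le_max_right ξ 0
    have hm1 : max ξ 0 ≤ 1 := max_le hξ.2 zero_le_one
    have hmξ : max ξ 0 ≤ 1 + ξ := max_le (by linarith) (by linarith [hξ.1])
    exact ⟨Or.inl ⟨by linarith, by linarith⟩, Or.inr ⟨by linarith, by linarith⟩⟩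
  have hfin : volume {η | η ∈ wNsSupport N ∧ ξ - η ∈ wNsSupport N} ≠ ⊤ :=
    ((isCompact_wNsSupport N).setOf_mem_and_sub_mem ξ).measure_lt_top.ne
  calc (1 : ℝ) = volume.real (Icc L (L + 1)) := by simp
    _ ≤ _ := measureReal_mono hsub hfin

lemma mul_abs_kawaharaResonance_le_one {b N ξ η t : ℝ} (hb : |b| ≤ 1) (hN : 2 ≤ N)
    (hξ : |ξ| ≤ 1) (hη : η ∈ wNsSupport N) (hξη : ξ - η ∈ wNsSupport N)
    (htN : t ≤ 1 / 66 * N ^ (-(4 : ℝ))) : t * |kawaharaResonance b ξ η| ≤ 1 := by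
  have hN0 : 0 ≤ N := by linarith
  have hΦ : |kawaharaResonance b ξ η| ≤ 66 * N ^ 4 :=
    calc |kawaharaResonance b ξ η| ≤ 13 * (N + 1) ^ 4 :=
          abs_kawaharaResonance_le hb hξ (by linarith) (abs_le_of_mem_wNsSupport hN0 hη)
            (abs_le_of_mem_wNsSupport hN0 hξη)
      _ ≤ 13 * (3 / 2 * N) ^ 4 := by gcongr; linarith
      _ ≤ 66 * N ^ 4 := by nlinarith [pow_nonneg hN0 4]
  have hN4 : N ^ (-(4 : ℝ)) = (N ^ 4)⁻¹ := by
    rw [Real.rpow_neg hN0, show (4 : ℝ) = (4 : ℕ) by norm_num, Real.rpow_natCast]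
  have hN4pos : 0 < N ^ 4 := by positivity
  calc t * |kawaharaResonance b ξ η| ≤ (1 / 66 * (N ^ 4)⁻¹) * (66 * N ^ 4) := by
        gcongr; rwa [← hN4]
    _ = 1 := by field_simp

lemma inv_log_mul_rpow_neg_sq {N : ℝ} (hN : 1 ≤ N) (s : ℝ) :
    ((Real.log N)⁻¹ * N ^ (-s)) ^ 2 = Real.log N ^ (-(2 : ℝ)) * N ^ (-(2 * s)) := by
  rw [mul_pow, inv_pow, ← Real.rpow_natCast, ← Real.rpow_natCast,
    ← Real.rpow_neg (Real.log_nonneg hN), ← Real.rpow_mul (by linarith)]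
  push_cast; ring_nf

/-- Lower bound on the second Kawahara Picard iterate with datum
`w_{N,s}`: there is `c > 0` such that for `0 < t ≤ c N⁻⁴` and `ξ ∈ [−1,1]`,
`|g₂(t)(ξ)| ≥ (t/2) |ξ| (log N)⁻² N^{−2s}`. -/
theorem statement15 :
    ∃ c : ℝ, 0 < c ∧
      ∀ b : ℝ, b = -1 ∨ b = 0 ∨ b = 1 →
      ∀ N s : ℝ, 2 ≤ N →
      ∀ g : ℕ → ℝ → ℝ → ℂ, KawPicard b (wNs N s) g →
      ∀ t : ℝ, 0 < t → t ≤ c * N ^ (-(4 : ℝ)) →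
      ∀ ξ : ℝ, ξ ∈ Set.Icc (-1 : ℝ) 1 →
        t / 2 * |ξ| * Real.log N ^ (-(2 : ℝ)) * N ^ (-(2 * s)) ≤
          ‖g 2 t ξ‖ := by
  refine ⟨1 / 66, by norm_num, ?_⟩
  intro b hb N s hN g hg t ht htN ξ hξ
  set α : ℝ := (Real.log N)⁻¹ * N ^ (-s)
  set S := {η | η ∈ wNsSupport N ∧ ξ - η ∈ wNsSupport N}
  have hb1 : |b| ≤ 1 := by rcases hb with rfl | rfl | rfl <;> norm_num
  have hsmall : ∀ η ∈ S, t * |kawaharaResonance b ξ η| ≤ 1 := fun η hη =>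
    mul_abs_kawaharaResonance_le_one hb1 hN (abs_le.2 hξ) hη.1 hη.2 htN
  have hlower := norm_intervalIntegral_setIntegral_exp_I_mul_ge (μ := volume)
    ((isCompact_wNsSupport N).setOf_mem_and_sub_mem ξ)
    (by unfold kawaharaResonance kawaharaSymbol; fun_prop) ht.le hsmall
  have hα : α ^ 2 = Real.log N ^ (-(2 : ℝ)) * N ^ (-(2 * s)) :=
    inv_log_mul_rpow_neg_sq (by linarith) s
  rw [KawPicard.norm_g_two_eq_of_indicator (isCompact_wNsSupport N).measurableSet hg]
  calc t / 2 * |ξ| * Real.log N ^ (-(2 : ℝ)) * N ^ (-(2 * s))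
      = |ξ| * α ^ 2 * (t * 1 / 2) := by rw [hα]; ring
    _ ≤ |ξ| * α ^ 2 * (t * volume.real S / 2) := by
        gcongr; exact one_le_volume_real_wNsSupport_pairs hξ
    _ ≤ _ := by gcongr
end
end
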